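/- Assume each q_i is Lipschitz continuous and let f be the bounded fractal function. Then ∫_{x_0}^{x_N} f(x) dx = (∑_{i=1}^N a_i ∫_{x_0}^{x_N} q_i(x) dx) / (1 − ∑_{i=1}^N a_i α_i); the denominator is nonzero since ∑_{i=1}^N a_i = 1, a_i > 0 and |α_i| < 1 imply ∑_{i=1}^N a_i α_i < 1. -/

import Mathlib

/-!
The fractal function is the uniform limit on `[x 0, x N)` of the iterates `T^[n] 0` of the
Read–Bajraktarević operator `T`, a contraction with constant `max |α i| < 1`. These iterates are
measurable, so the bounded function `f` is integrable. Integrating `f (L i t) = α i f t + q i t`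
over `[x 0, x N]` with the substitution `s = L i t` and summing over the pieces gives
`∫ f = (∑ a i α i) ∫ f + ∑ a i ∫ q i`, and `∑ a i α i < ∑ a i = 1`.
-/

open Set

noncomputable def aC (x : ℕ → ℝ) (N i : ℕ) : ℝ := (x (i + 1) - x i) / (x N - x 0)

noncomputable def bC (x : ℕ → ℝ) (N i : ℕ) : ℝ := (x N * x i - x 0 * x (i + 1)) / (x N - x 0)

/-- The affine map `L i t = a i * t + b i`. -/
noncomputable def Lm (x : ℕ → ℝ) (N i : ℕ) (t : ℝ) : ℝ := aC x N i * t + bC x N i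

open MeasureTheory Filter Topology

section Nodes

variable {N : ℕ} {x : ℕ → ℝ}

theorem nodes_le_of_le (hx : ∀ i < N, x i < x (i + 1)) {i j : ℕ} (hij : i ≤ j) (hj : j ≤ N) :
    x i ≤ x j :=
  (strictMonoOn_Iic_of_lt_succ (by simpa using hx)).monotoneOn
    (mem_Iic.2 (hij.trans hj)) (mem_Iic.2 hj) hij

theorem nodes_zero_lt (hx : ∀ i < N, x i < x (i + 1)) (hN : 0 < N) : x 0 < x N := by
  obtain ⟨n, rfl⟩ : ∃ n, N = n + 1 := ⟨N - 1, by omega⟩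
  exact (nodes_le_of_le hx n.zero_le n.le_succ).trans_lt (hx n n.lt_succ_self)

theorem aC_pos (hx : ∀ i < N, x i < x (i + 1)) (h0N : x 0 < x N) {i : ℕ} (hi : i < N) :
    0 < aC x N i :=
  div_pos (sub_pos.2 (hx i hi)) (sub_pos.2 h0N)

theorem sum_aC (h0N : x 0 ≠ x N) : ∑ i ∈ Finset.range N, aC x N i = 1 := by
  simp only [aC]
  rw [← Finset.sum_div, Finset.sum_range_sub x, div_self (sub_ne_zero.2 h0N.symm)]

theorem sum_aC_mul_lt_one (hx : ∀ i < N, x i < x (i + 1)) (hN : 0 < N) {α : ℕ → ℝ}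
    (hα : ∀ i < N, α i < 1) : ∑ i ∈ Finset.range N, aC x N i * α i < 1 := by
  have h0N := nodes_zero_lt hx hN
  calc ∑ i ∈ Finset.range N, aC x N i * α i < ∑ i ∈ Finset.range N, aC x N i :=
        Finset.sum_lt_sum_of_nonempty (Finset.nonempty_range_iff.2 hN.ne') fun i hi =>
          mul_lt_of_lt_one_right (aC_pos hx h0N (Finset.mem_range.1 hi))
            (hα i (Finset.mem_range.1 hi))
    _ = 1 := sum_aC h0N.ne

theorem Lm_nodes_zero (h0N : x 0 ≠ x N) (i : ℕ) : Lm x N i (x 0) = x i := by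
  have := sub_ne_zero.2 h0N.symm
  unfold Lm aC bC
  field_simp
  ring

theorem Lm_nodes_last (h0N : x 0 ≠ x N) (i : ℕ) : Lm x N i (x N) = x (i + 1) := by
  have := sub_ne_zero.2 h0N.symm
  unfold Lm aC bC
  field_simp
  ring

theorem strictMono_Lm {i : ℕ} (ha : 0 < aC x N i) : StrictMono (Lm x N i) := fun _ _ h => by
  unfold Lm
  gcongr

noncomputable def Linv (x : ℕ → ℝ) (N i : ℕ) (s : ℝ) : ℝ := (s - bC x N i) / aC x N i

theorem Lm_Linv {i : ℕ} (ha : aC x N i ≠ 0) (s : ℝ) : Lm x N i (Linv x N i s) = s := by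
  unfold Lm Linv
  field_simp
  ring

theorem Linv_mem_Ico (hx : ∀ i < N, x i < x (i + 1)) (h0N : x 0 < x N) {i : ℕ} (hi : i < N)
    {s : ℝ} (hs : s ∈ Ico (x i) (x (i + 1))) : Linv x N i s ∈ Ico (x 0) (x N) := by
  have ha := aC_pos hx h0N hi
  have hmono := strictMono_Lm ha
  rw [← Lm_nodes_zero h0N.ne, ← Lm_nodes_last h0N.ne, ← Lm_Linv ha.ne' s] at hs
  exact ⟨hmono.le_iff_le.1 hs.1, hmono.lt_iff_lt.1 hs.2⟩

theorem exists_mem_Ico_nodes {s : ℝ} (hs : s ∈ Ico (x 0) (x N)) :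
    ∃ i < N, s ∈ Ico (x i) (x (i + 1)) := by
  obtain ⟨i, hi, hs⟩ := mem_iUnion₂.1 (Ico_subset_biUnion_Ico N x hs)
  exact ⟨i, Finset.mem_range.1 hi, hs⟩

theorem disjoint_Ico_nodes (hx : ∀ i < N, x i < x (i + 1)) {i j : ℕ} (hi : i < N) (hj : j < N)
    (hij : i ≠ j) : Disjoint (Ico (x i) (x (i + 1))) (Ico (x j) (x (j + 1))) := by
  wlog h : i < j generalizing i j
  · exact (this hj hi hij.symm (lt_of_le_of_ne (not_lt.1 h) hij.symm)).symm
  exact disjoint_left.2 fun s hsi hsj =>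
    (hsi.2.trans_le (nodes_le_of_le hx h hj.le)).not_ge hsj.1

end Nodes

section FractalOperator

variable {N : ℕ} {x : ℕ → ℝ} {α : ℕ → ℝ} {q : ℕ → ℝ → ℝ}

/-- The operator `T` of the paper, except that `T g` vanishes at `x N`;
only `[x 0, x N)` matters. -/
noncomputable def fractalOp (x : ℕ → ℝ) (N : ℕ) (α : ℕ → ℝ) (q : ℕ → ℝ → ℝ) (g : ℝ → ℝ) :
    ℝ → ℝ := fun s =>
  ∑ i ∈ Finset.range N, (Ico (x i) (x (i + 1))).indicator
    (fun u => α i * g (Linv x N i u) + q i (Linv x N i u)) s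

theorem measurable_fractalOp (hq : ∀ i < N, Measurable (q i)) {g : ℝ → ℝ} (hg : Measurable g) :
    Measurable (fractalOp x N α q g) := by
  have hLinv : ∀ i, Measurable (Linv x N i) := fun i => by unfold Linv; fun_prop
  refine Finset.measurable_sum _ fun i hi => Measurable.indicator ?_ measurableSet_Ico
  exact (measurable_const.mul (hg.comp (hLinv i))).add
    ((hq i (Finset.mem_range.1 hi)).comp (hLinv i))

theorem fractalOp_apply (hx : ∀ i < N, x i < x (i + 1)) (g : ℝ → ℝ) {i : ℕ} (hi : i < N) {s : ℝ}
    (hs : s ∈ Ico (x i) (x (i + 1))) :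
    fractalOp x N α q g s = α i * g (Linv x N i s) + q i (Linv x N i s) := by
  unfold fractalOp
  rw [Finset.sum_eq_single_of_mem i (Finset.mem_range.2 hi), indicator_of_mem hs]
  intro j hj hji
  exact indicator_of_notMem
    ((disjoint_Ico_nodes hx hi (Finset.mem_range.1 hj) hji.symm).notMem_of_mem_left hs) _

variable {f : ℝ → ℝ}

theorem abs_sub_fractalOp_le (hx : ∀ i < N, x i < x (i + 1)) (h0N : x 0 < x N) {c ε : ℝ}
    (hc : ∀ i < N, |α i| ≤ c)
    (hfe : ∀ i < N, ∀ t ∈ Ico (x 0) (x N), f (Lm x N i t) = α i * f t + q i t)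
    {g : ℝ → ℝ} (hg : ∀ t ∈ Ico (x 0) (x N), |f t - g t| ≤ ε) {s : ℝ}
    (hs : s ∈ Ico (x 0) (x N)) : |f s - fractalOp x N α q g s| ≤ c * ε := by
  obtain ⟨i, hi, hsi⟩ := exists_mem_Ico_nodes hs
  have ht := Linv_mem_Ico hx h0N hi hsi
  have hfs : f s = α i * f (Linv x N i s) + q i (Linv x N i s) := by
    rw [← hfe i hi _ ht, Lm_Linv (aC_pos hx h0N hi).ne']
  rw [fractalOp_apply hx g hi hsi, hfs, add_sub_add_right_eq_sub, ← mul_sub, abs_mul]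
  exact mul_le_mul (hc i hi) (hg _ ht) (abs_nonneg _) ((abs_nonneg _).trans (hc i hi))

theorem abs_sub_iterate_fractalOp_le (hx : ∀ i < N, x i < x (i + 1)) (h0N : x 0 < x N) {c M : ℝ}
    (hc : ∀ i < N, |α i| ≤ c)
    (hfe : ∀ i < N, ∀ t ∈ Ico (x 0) (x N), f (Lm x N i t) = α i * f t + q i t)
    (hM : ∀ t ∈ Ico (x 0) (x N), |f t| ≤ M) (n : ℕ) :
    ∀ s ∈ Ico (x 0) (x N), |f s - (fractalOp x N α q)^[n] 0 s| ≤ c ^ n * M := by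
  induction n with
  | zero => simpa using hM
  | succ n ih =>
    intro s hs
    rw [Function.iterate_succ_apply', pow_succ', mul_assoc]
    exact abs_sub_fractalOp_le hx h0N hc hfe ih hs

end FractalOperator

section Integral

variable {N : ℕ} {x : ℕ → ℝ} {α : ℕ → ℝ} {q : ℕ → ℝ → ℝ} {f : ℝ → ℝ}

theorem exists_lt_one_forall_abs_le (hα : ∀ i < N, |α i| < 1) :
    ∃ c, 0 ≤ c ∧ c < 1 ∧ ∀ i < N, |α i| ≤ c := by
  refine ⟨((Finset.range N).sup fun i => ‖α i‖₊ : NNReal), NNReal.coe_nonneg _, ?_, fun i hi => ?_⟩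
  · exact_mod_cast (Finset.sup_lt_iff one_pos).2 fun i hi => by
      simpa [← NNReal.coe_lt_coe] using hα i (Finset.mem_range.1 hi)
  · exact_mod_cast Finset.le_sup (f := fun i => ‖α i‖₊) (Finset.mem_range.2 hi)

theorem aestronglyMeasurable_restrict_of_fractal (hx : ∀ i < N, x i < x (i + 1))
    (h0N : x 0 < x N) (hα : ∀ i < N, |α i| < 1) (hq : ∀ i < N, Measurable (q i)) {M : ℝ}
    (hM : ∀ t ∈ Ico (x 0) (x N), |f t| ≤ M)
    (hfe : ∀ i < N, ∀ t ∈ Ico (x 0) (x N), f (Lm x N i t) = α i * f t + q i t) :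
    AEStronglyMeasurable f (volume.restrict (Ico (x 0) (x N))) := by
  obtain ⟨c, hc0, hc1, hc⟩ := exists_lt_one_forall_abs_le hα
  have hmeas : ∀ n, Measurable ((fractalOp x N α q)^[n] 0) := by
    intro n
    induction n with
    | zero => exact measurable_const
    | succ n ih => rw [Function.iterate_succ']; exact measurable_fractalOp hq ih
  have hlim : Tendsto (fun n => c ^ n * M) atTop (𝓝 0) := by
    simpa using (tendsto_pow_atTop_nhds_zero_of_lt_one hc0 hc1).mul_const M
  refine (aemeasurable_of_tendsto_metrizable_ae' (fun n => (hmeas n).aemeasurable)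
    (ae_restrict_of_forall_mem measurableSet_Ico fun s hs => ?_)).aestronglyMeasurable
  rw [tendsto_iff_dist_tendsto_zero]
  refine squeeze_zero (fun _ => dist_nonneg) (fun n => ?_) hlim
  rw [Real.dist_eq, abs_sub_comm]
  exact abs_sub_iterate_fractalOp_le hx h0N hc hfe hM n s hs

theorem intervalIntegrable_of_fractal (hx : ∀ i < N, x i < x (i + 1)) (h0N : x 0 < x N)
    (hα : ∀ i < N, |α i| < 1) (hq : ∀ i < N, ContinuousOn (q i) (Icc (x 0) (x N))) {M : ℝ}
    (hM : ∀ t ∈ Ico (x 0) (x N), |f t| ≤ M)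
    (hfe : ∀ i < N, ∀ t ∈ Ico (x 0) (x N), f (Lm x N i t) = α i * f t + q i t) :
    IntervalIntegrable f volume (x 0) (x N) := by
  classical
  -- `f` only sees `q i` on `[x 0, x N]`, so `q i` may be replaced by a measurable extension.
  let q' : ℕ → ℝ → ℝ := fun i => (Icc (x 0) (x N)).piecewise (q i) 0
  have hq' : ∀ i < N, Measurable (q' i) := fun i hi =>
    (hq i hi).measurable_piecewise continuousOn_const measurableSet_Icc
  have hfe' : ∀ i < N, ∀ t ∈ Ico (x 0) (x N), f (Lm x N i t) = α i * f t + q' i t :=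
    fun i hi t ht => by
      rw [hfe i hi t ht]
      simp only [q', piecewise_eq_of_mem _ _ _ (Ico_subset_Icc_self ht)]
  rw [intervalIntegrable_iff_integrableOn_Ico_of_le h0N.le]
  exact ⟨aestronglyMeasurable_restrict_of_fractal hx h0N hα hq' hM hfe',
    .restrict_of_bounded (C := M) measure_Ico_lt_top
      (ae_restrict_of_forall_mem measurableSet_Ico hM)⟩

theorem integral_Ico_nodes (hx : ∀ i < N, x i < x (i + 1)) (h0N : x 0 < x N) {i : ℕ} (hi : i < N)
    {a : ℝ} {p : ℝ → ℝ} (hf : IntervalIntegrable f volume (x 0) (x N))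
    (hp : IntervalIntegrable p volume (x 0) (x N))
    (hfe : ∀ t ∈ Ico (x 0) (x N), f (Lm x N i t) = a * f t + p t) :
    ∫ s in x i..x (i + 1), f s =
      aC x N i * (a * (∫ t in x 0..x N, f t) + ∫ t in x 0..x N, p t) := by
  have ha := aC_pos hx h0N hi
  have hcomp : (aC x N i)⁻¹ * ∫ s in x i..x (i + 1), f s = ∫ t in x 0..x N, f (Lm x N i t) := by
    rw [← Lm_nodes_zero h0N.ne, ← Lm_nodes_last h0N.ne]
    exact (intervalIntegral.integral_comp_mul_add f ha.ne' _).symm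
  have hfe_int : ∫ t in x 0..x N, f (Lm x N i t) =
      a * (∫ t in x 0..x N, f t) + ∫ t in x 0..x N, p t := by
    rw [← intervalIntegral.integral_const_mul, ← intervalIntegral.integral_add (hf.const_mul a) hp]
    refine intervalIntegral.integral_congr_ae ?_
    filter_upwards [(Ioo_ae_eq_Ioc (a := x 0) (b := x N)).mem_iff] with t ht htI
    rw [uIoc_of_le h0N.le, ← ht] at htI
    exact hfe t (Ioo_subset_Ico_self htI)
  rw [← hfe_int, ← hcomp, mul_inv_cancel_left₀ ha.ne']

theorem integral_eq_sum_mul_integral_add (hx : ∀ i < N, x i < x (i + 1)) (h0N : x 0 < x N)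
    (hf : IntervalIntegrable f volume (x 0) (x N))
    (hq : ∀ i < N, IntervalIntegrable (q i) volume (x 0) (x N))
    (hfe : ∀ i < N, ∀ t ∈ Ico (x 0) (x N), f (Lm x N i t) = α i * f t + q i t) :
    ∫ t in x 0..x N, f t = (∑ i ∈ Finset.range N, aC x N i * α i) * (∫ t in x 0..x N, f t) +
      ∑ i ∈ Finset.range N, aC x N i * ∫ t in x 0..x N, q i t := by
  have hpieces : ∀ k < N, IntervalIntegrable f volume (x k) (x (k + 1)) := fun k hk =>
    hf.mono_set <| by
      rw [uIcc_of_le h0N.le, uIcc_of_le (hx k hk).le]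
      exact Icc_subset_Icc (nodes_le_of_le hx k.zero_le hk.le) (nodes_le_of_le hx hk le_rfl)
  calc ∫ t in x 0..x N, f t = ∑ i ∈ Finset.range N, ∫ s in x i..x (i + 1), f s :=
        (intervalIntegral.sum_integral_adjacent_intervals hpieces).symm
    _ = ∑ i ∈ Finset.range N, (aC x N i * α i * (∫ t in x 0..x N, f t) +
          aC x N i * ∫ t in x 0..x N, q i t) := Finset.sum_congr rfl fun i hi => by
        have hi := Finset.mem_range.1 hi
        rw [integral_Ico_nodes hx h0N hi hf (hq i hi) (hfe i hi)]
        ring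
    _ = _ := by rw [Finset.sum_add_distrib, Finset.sum_mul]

end Integral

theorem stmt12_general
    (N : ℕ) (hN : 2 ≤ N)
    (x : ℕ → ℝ)
    (hx : ∀ i, i < N → x i < x (i + 1))
    (α : ℕ → ℝ) (hα : ∀ i, i < N → |α i| < 1)
    (q : ℕ → ℝ → ℝ)
    (hq : ∀ i, i < N → ∃ C, ∀ u ∈ Icc (x 0) (x N), ∀ v ∈ Icc (x 0) (x N),
      |q i u - q i v| ≤ C * |u - v|)
    (f : ℝ → ℝ)
    (hfb : ∃ M, ∀ t ∈ Icc (x 0) (x N), |f t| ≤ M)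
    (hfe : ∀ i, i < N → ∀ t ∈ Ico (x 0) (x N), f (Lm x N i t) = α i * f t + q i t) :
    (∑ i ∈ Finset.range N, aC x N i * α i) < 1 ∧
    ∫ t in (x 0)..(x N), f t =
      (∑ i ∈ Finset.range N, aC x N i * ∫ t in (x 0)..(x N), q i t) /
        (1 - ∑ i ∈ Finset.range N, aC x N i * α i) := by
  have h0N := nodes_zero_lt hx (by omega)
  have hqc : ∀ i < N, ContinuousOn (q i) (Icc (x 0) (x N)) := fun i hi =>
    let ⟨_, hC⟩ := hq i hi
    (LipschitzOnWith.of_dist_le' hC).continuousOn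
  obtain ⟨M, hM⟩ := hfb
  have hf := intervalIntegrable_of_fractal hx h0N hα hqc
    (fun t ht => hM t (Ico_subset_Icc_self ht)) hfe
  have hS := sum_aC_mul_lt_one hx (by omega) fun i hi => (abs_lt.1 (hα i hi)).2
  refine ⟨hS, ?_⟩
  rw [eq_div_iff (sub_pos.2 hS).ne']
  linear_combination integral_eq_sum_mul_integral_add hx h0N hf
    (fun i hi => (hqc i hi).intervalIntegrable_of_Icc h0N.le) hfe

/-- The integral of the bounded fractal function:
`∫ f = (∑ a i ∫ q i) / (1 - ∑ a i α i)`, where `∑ a i α i < 1`. -/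
theorem stmt12
    (N : ℕ) (hN : 2 ≤ N)
    (x : ℕ → ℝ)
    (hx : ∀ i, i < N → x i < x (i + 1))
    (α : ℕ → ℝ) (hα : ∀ i, i < N → |α i| < 1)
    (q : ℕ → ℝ → ℝ)
    (hq : ∀ i, i < N → ∃ C, ∀ u ∈ Icc (x 0) (x N), ∀ v ∈ Icc (x 0) (x N),
      |q i u - q i v| ≤ C * |u - v|)
    (f : ℝ → ℝ)
    (hfb : ∃ M, ∀ t ∈ Icc (x 0) (x N), |f t| ≤ M)
    (hfe : ∀ i, i < N → ∀ t ∈ Ico (x 0) (x N), f (Lm x N i t) = α i * f t + q i t)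
    (hfeN : f (Lm x N (N - 1) (x N)) = α (N - 1) * f (x N) + q (N - 1) (x N)) :
    (∑ i ∈ Finset.range N, aC x N i * α i) < 1 ∧
    ∫ t in (x 0)..(x N), f t =
      (∑ i ∈ Finset.range N, aC x N i * ∫ t in (x 0)..(x N), q i t) /
        (1 - ∑ i ∈ Finset.range N, aC x N i * α i) :=
  stmt12_general N hN x hx α hα q hq f hfb hfe
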